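/- arXiv:2404.04599 — 2 statements merged into one kernel-verified Lean document; each statement's English description precedes it below -/
import Mathlib

section
/- Schmidt-rank farness reduction (key step in Theorem thm:schmidt-rank): Let d ≥ 1, 1 ≤ r ≤ d, ε ∈ (0, 1], and let ψ : (Fin d × Fin d) → ℂ be a unit vector. Suppose that for every density matrix σ on Fin d with rank σ ≤ r one has d_tr(tr_B(ψψ†), σ) ≥ ε². Then for every unit vector φ : (Fin d × Fin d) → ℂ whose Schmidt rank is at most r, one has |⟨φ, ψ⟩|² ≤ 1 − ε² and d_tr(ψψ†, φφ†) ≥ ε. -/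
open scoped ComplexConjugate ComplexOrder Kronecker Matrix
open MeasureTheory

namespace PaperStmt

/-- The rank-one matrix `ψψ†` associated with a vector `ψ`. -/
noncomputable def outer {ι : Type*} (ψ : ι → ℂ) : Matrix ι ι ℂ :=
  Matrix.of fun x y => ψ x * conj (ψ y)

/-- The `N`-fold tensor power of a square matrix `ρ`. -/
noncomputable def tpow {ι : Type*} (ρ : Matrix ι ι ℂ) (N : ℕ) : Matrix (Fin N → ι) (Fin N → ι) ℂ :=
  Matrix.of fun x y => ∏ i, ρ (x i) (y i)

/-- `ψ` is a unit vector (for the ℓ² norm). -/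
def IsUnitVec {ι : Type*} [Fintype ι] (ψ : ι → ℂ) : Prop :=
  ∑ x, Complex.normSq (ψ x) = 1

/-- `0 ⊑ T ⊑ 1` in the Loewner order. -/
def IsTester {κ : Type*} [Fintype κ] [DecidableEq κ] (T : Matrix κ κ ℂ) : Prop :=
  T.PosSemidef ∧ ((1 : Matrix κ κ ℂ) - T).PosSemidef

/-- `ρ` is a density matrix: positive semidefinite with unit trace. -/
def IsDensity {ι : Type*} [Fintype ι] (ρ : Matrix ι ι ℂ) : Prop :=
  ρ.PosSemidef ∧ ρ.trace = 1

/-- The acceptance probability `tr (T · ρ^{⊗N})` of a tester `T` on `N` samples of `ρ`. -/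
noncomputable def acc {ι : Type*} [Fintype ι] {N : ℕ}
    (T : Matrix (Fin N → ι) (Fin N → ι) ℂ) (ρ : Matrix ι ι ℂ) : ℝ :=
  ((T * tpow ρ N).trace).re

/-- The trace distance `½ ∑ᵢ |λᵢ(ρ - σ)|` between (Hermitian) matrices. -/
noncomputable def traceDist {κ : Type*} [Fintype κ] [DecidableEq κ]
    (ρ σ : Matrix κ κ ℂ) : ℝ :=
  if h : (ρ - σ).IsHermitian then (1 / 2) * ∑ i, |h.eigenvalues i| else 0

/-- The local tester on `H_A` determined by a matrix `M` acting on Alice's registers. -/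
noncomputable def localA {d N : ℕ} (M : Matrix (Fin N → Fin d) (Fin N → Fin d) ℂ) :
    Matrix (Fin N → Fin d × Fin d) (Fin N → Fin d × Fin d) ℂ :=
  Matrix.of fun x y =>
    M (fun i => (x i).1) (fun i => (y i).1) *
      (if (fun i => (x i).2) = (fun i => (y i).2) then 1 else 0)

/-- The vector `(I ⊗ U) ψ` : the unitary `U` applied to the `B` part of `ψ`. -/
noncomputable def applyB {d : ℕ} (U : Matrix (Fin d) (Fin d) ℂ) (ψ : Fin d × Fin d → ℂ) :
    Fin d × Fin d → ℂ :=
  fun p => ∑ k, U p.2 k * ψ (p.1, k)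

/-- The partial trace over the second (`B`) tensor factor. -/
noncomputable def ptraceB {d : ℕ} (M : Matrix (Fin d × Fin d) (Fin d × Fin d) ℂ) :
    Matrix (Fin d) (Fin d) ℂ :=
  Matrix.of fun a b => ∑ j, M (a, j) (b, j)


/-- The Schmidt rank of a bipartite vector: the rank of its coefficient matrix. -/
noncomputable def schmidtRank {d : ℕ} (ψ : Fin d × Fin d → ℂ) : ℕ :=
  (Matrix.of fun i j : Fin d => ψ (i, j)).rank

/-! ### Auxiliary lemmas -/

section Aux

open Finset Matrix

lemma aux_sum_abs_sq_le {n : Type*} [Fintype n] (x : n → ℝ) (hx : ∑ i, x i = 0) :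
    2 * ∑ i, x i ^ 2 ≤ (∑ i, |x i|) ^ 2 := by
  classical
  have key : ∀ (f : n → ℝ), (∑ i, f i)^2 =
      ∑ i, f i ^ 2 + ∑ p ∈ (univ ×ˢ univ).filter (fun p : n × n => p.1 ≠ p.2), f p.1 * f p.2 := by
    intro f
    rw [sq, Finset.sum_mul_sum, ← Finset.sum_product']
    rw [← Finset.sum_filter_add_sum_filter_not (univ ×ˢ univ) (fun p : n × n => p.1 = p.2)]
    congr 1
    rw [Finset.sum_filter]
    rw [Finset.sum_product]
    simp [Finset.sum_ite_eq', sq]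
  have h1 := key x
  have h2 := key (fun i => |x i|)
  rw [hx] at h1
  simp only [sq_abs] at h2
  have habs : |∑ p ∈ (univ ×ˢ univ).filter (fun p : n × n => p.1 ≠ p.2), x p.1 * x p.2|
      ≤ ∑ p ∈ (univ ×ˢ univ).filter (fun p : n × n => p.1 ≠ p.2), |x p.1| * |x p.2| := by
    refine (Finset.abs_sum_le_sum_abs _ _).trans_eq ?_
    exact Finset.sum_congr rfl (by intro p _; exact abs_mul _ _)
  have h3 : ∑ p ∈ (univ ×ˢ univ).filter (fun p : n × n => p.1 ≠ p.2), x p.1 * x p.2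
      = - ∑ i, x i ^ 2 := by linarith [h1]
  rw [h3] at habs
  rw [abs_neg] at habs
  have h4 : ∑ i, x i ^ 2 ≤ |∑ i, x i ^ 2| := le_abs_self _
  nlinarith [h2, habs, h4]

lemma psd_diag_nonneg {n : Type*} [Fintype n] [DecidableEq n]
    {M : Matrix n n ℂ} (hM : M.PosSemidef) (i : n) : 0 ≤ M i i := by
  exact hM.diag_nonneg

lemma trace_conj_unitary {n : Type*} [Fintype n] [DecidableEq n]
    (U : Matrix.unitaryGroup n ℂ) (B : Matrix n n ℂ) :
    ((star (U : Matrix n n ℂ)) * B * (U : Matrix n n ℂ)).trace = B.trace := by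
  rw [Matrix.trace_mul_cycle, Matrix.mem_unitaryGroup_iff.mp U.2, Matrix.one_mul]

lemma sum_abs_eigenvalues_le {n : Type*} [Fintype n] [DecidableEq n]
    {H A B : Matrix n n ℂ} (hHAB : H = A - B) (hA : A.PosSemidef) (hB : B.PosSemidef)
    (hH : H.IsHermitian) :
    ∑ i, |hH.eigenvalues i| ≤ (A.trace).re + (B.trace).re := by
  subst hHAB
  set U : Matrix.unitaryGroup n ℂ := hH.eigenvectorUnitary with hU
  have hdiag : star (U : Matrix n n ℂ) * (A - B) * (U : Matrix n n ℂ) =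
      Matrix.diagonal (RCLike.ofReal ∘ hH.eigenvalues) := by
    have h := hH.conjStarAlgAut_star_eigenvectorUnitary
    rwa [Unitary.conjStarAlgAut_star_apply] at h
  set A' := (star (U : Matrix n n ℂ)) * A * (U : Matrix n n ℂ) with hA'
  set B' := (star (U : Matrix n n ℂ)) * B * (U : Matrix n n ℂ) with hB'
  have hA'psd : A'.PosSemidef := hA.conjTranspose_mul_mul_same _
  have hB'psd : B'.PosSemidef := hB.conjTranspose_mul_mul_same _
  have hsub : A' - B' = Matrix.diagonal (RCLike.ofReal ∘ hH.eigenvalues) := by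
    rw [hA', hB', ← hdiag]
    noncomm_ring
  have hentry : ∀ i, (A' i i).re - (B' i i).re = hH.eigenvalues i := by
    intro i
    have := congrArg (fun M => (M i i).re) hsub
    simpa [Matrix.sub_apply, Matrix.diagonal_apply_eq] using this
  have hAnn : ∀ i, 0 ≤ (A' i i).re := fun i => (Complex.le_def.mp (psd_diag_nonneg hA'psd i)).1
  have hBnn : ∀ i, 0 ≤ (B' i i).re := fun i => (Complex.le_def.mp (psd_diag_nonneg hB'psd i)).1
  calc ∑ i, |hH.eigenvalues i| ≤ ∑ i, ((A' i i).re + (B' i i).re) := by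
        refine Finset.sum_le_sum fun i _ => ?_
        rw [← hentry i]
        have := hAnn i; have := hBnn i
        rw [abs_le]; constructor <;> linarith
    _ = (A'.trace).re + (B'.trace).re := by
        rw [Finset.sum_add_distrib]
        simp [Matrix.trace, Matrix.diag, Complex.re_sum]
    _ = (A.trace).re + (B.trace).re := by
        rw [hA', hB', trace_conj_unitary, trace_conj_unitary]

lemma star_mul_self_one {n : Type*} [Fintype n] [DecidableEq n]
    (U : Matrix.unitaryGroup n ℂ) : star (U : Matrix n n ℂ) * (U : Matrix n n ℂ) = 1 :=
  Unitary.coe_star_mul_self U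

lemma trace_eq_sum_eigenvalues {n : Type*} [Fintype n] [DecidableEq n]
    {A : Matrix n n ℂ} (hH : A.IsHermitian) :
    A.trace = ((∑ i, hH.eigenvalues i : ℝ) : ℂ) := by
  conv_lhs => rw [hH.spectral_theorem, Unitary.conjStarAlgAut_apply]
  rw [Matrix.trace_mul_cycle, star_mul_self_one, Matrix.one_mul, Matrix.trace_diagonal]
  push_cast
  rfl

lemma trace_sq_eq_sum_sq {n : Type*} [Fintype n] [DecidableEq n]
    {A : Matrix n n ℂ} (hH : A.IsHermitian) :
    (A * A).trace = ((∑ i, hH.eigenvalues i ^ 2 : ℝ) : ℂ) := by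
  set u := (hH.eigenvectorUnitary : Matrix n n ℂ) with hu
  have huu : u * star u = 1 := Matrix.mem_unitaryGroup_iff.mp hH.eigenvectorUnitary.2
  have hD : star u * A * u = Matrix.diagonal (RCLike.ofReal ∘ hH.eigenvalues) := by
    have h := hH.conjStarAlgAut_star_eigenvectorUnitary
    rwa [Unitary.conjStarAlgAut_star_apply] at h
  have key : star u * (A * A) * u =
      Matrix.diagonal (RCLike.ofReal ∘ hH.eigenvalues) * Matrix.diagonal (RCLike.ofReal ∘ hH.eigenvalues) := by
    rw [← hD]
    calc star u * (A * A) * u = (star u * A) * (u * star u) * (A * u) := by rw [huu]; noncomm_ring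
      _ = star u * A * u * (star u * A * u) := by noncomm_ring
  have := congrArg Matrix.trace key
  rw [trace_conj_unitary hH.eigenvectorUnitary] at this
  rw [this, Matrix.diagonal_mul_diagonal, Matrix.trace_diagonal]
  push_cast
  simp [Function.comp, sq]

lemma outer_isHermitian {ι : Type*} [Fintype ι] (ψ : ι → ℂ) : (outer ψ).IsHermitian := by
  ext x y
  simp [outer, Matrix.conjTranspose_apply, mul_comm]

lemma trace_outer {ι : Type*} [Fintype ι] (ψ : ι → ℂ) :
    (outer ψ).trace = ((∑ x, Complex.normSq (ψ x) : ℝ) : ℂ) := by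
  simp only [Matrix.trace, Matrix.diag, outer, Matrix.of_apply]
  push_cast
  exact Finset.sum_congr rfl fun x _ => (Complex.mul_conj _)

lemma trace_outer_mul_outer {ι : Type*} [Fintype ι] (a b : ι → ℂ) :
    (outer a * outer b).trace = ((Complex.normSq (∑ x, conj (a x) * b x) : ℝ) : ℂ) := by
  have : (outer a * outer b).trace
      = (∑ x, conj (a x) * b x) * (∑ x, a x * conj (b x)) := by
    simp only [Matrix.trace, Matrix.diag, Matrix.mul_apply, outer, Matrix.of_apply]
    rw [Finset.sum_comm, Finset.sum_mul_sum]
    refine Finset.sum_congr rfl fun k _ => Finset.sum_congr rfl fun x _ => by ring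
  rw [this]
  have h2 : ∑ x, a x * conj (b x) = conj (∑ x, conj (a x) * b x) := by
    rw [map_sum]
    congr 1; funext x
    simp [mul_comm]
  rw [h2, Complex.mul_conj]

lemma part2_bound {ι : Type*} [Fintype ι] [DecidableEq ι] (ψ φ : ι → ℂ)
    (hψ : ∑ x, Complex.normSq (ψ x) = 1) (hφ : ∑ x, Complex.normSq (φ x) = 1)
    (hH : (outer ψ - outer φ).IsHermitian) :
    4 * (1 - Complex.normSq (∑ x, conj (φ x) * ψ x)) ≤ (∑ i, |hH.eigenvalues i|) ^ 2 := by
  set c := Complex.normSq (∑ x, conj (φ x) * ψ x) with hc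
  have htr0 : ∑ i, hH.eigenvalues i = 0 := by
    have h := trace_eq_sum_eigenvalues hH
    rw [Matrix.trace_sub, trace_outer, trace_outer, hψ, hφ, sub_self] at h
    exact_mod_cast h.symm
  have hsq : ∑ i, hH.eigenvalues i ^ 2 = 2 - 2 * c := by
    have h := trace_sq_eq_sum_sq hH
    have hexp : (outer ψ - outer φ) * (outer ψ - outer φ)
        = outer ψ * outer ψ - outer ψ * outer φ - outer φ * outer ψ + outer φ * outer φ := by
      noncomm_ring
    rw [hexp] at h
    have e1 : (outer ψ * outer ψ).trace = ((1 : ℝ) : ℂ) := by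
      rw [trace_outer_mul_outer]
      norm_cast
      have : ∑ x, conj (ψ x) * ψ x = ((1:ℝ) : ℂ) := by
        rw [← hψ]; push_cast
        exact Finset.sum_congr rfl fun x _ => by rw [mul_comm, Complex.mul_conj]
      rw [this]; simp [Complex.normSq_ofReal]
    have e4 : (outer φ * outer φ).trace = ((1 : ℝ) : ℂ) := by
      rw [trace_outer_mul_outer]
      norm_cast
      have : ∑ x, conj (φ x) * φ x = ((1:ℝ) : ℂ) := by
        rw [← hφ]; push_cast
        exact Finset.sum_congr rfl fun x _ => by rw [mul_comm, Complex.mul_conj]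
      rw [this]; simp [Complex.normSq_ofReal]
    have e2 : (outer ψ * outer φ).trace = (c : ℂ) := by
      rw [trace_outer_mul_outer]
      norm_cast
      have : ∑ x, conj (ψ x) * φ x = conj (∑ x, conj (φ x) * ψ x) := by
        rw [map_sum]; congr 1; funext x; simp [mul_comm]
      rw [this, Complex.normSq_conj]
    have e3 : (outer φ * outer ψ).trace = (c : ℂ) := by
      rw [trace_outer_mul_outer]
    rw [Matrix.trace_add, Matrix.trace_sub, Matrix.trace_sub, e1, e2, e3, e4] at h
    have : ((∑ i, hH.eigenvalues i ^ 2 : ℝ) : ℂ) = ((2 - 2*c : ℝ) : ℂ) := by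
      rw [← h]; push_cast; ring
    exact_mod_cast this
  have key := aux_sum_abs_sq_le hH.eigenvalues htr0
  rw [hsq] at key
  linarith

section sand
variable {n : Type*} [Fintype n] [DecidableEq n] (U : Matrix.unitaryGroup n ℂ)

noncomputable def sand (g : n → ℝ) : Matrix n n ℂ :=
  (U : Matrix n n ℂ) * Matrix.diagonal (fun i => (g i : ℂ)) * star (U : Matrix n n ℂ)

lemma sand_mul_sand (g g' : n → ℝ) : sand U g * sand U g' = sand U (fun i => g i * g' i) := by
  unfold sand
  have huu : star (U : Matrix n n ℂ) * (U : Matrix n n ℂ) = 1 := Unitary.coe_star_mul_self U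
  calc (U : Matrix n n ℂ) * Matrix.diagonal (fun i => (g i : ℂ)) * star (U : Matrix n n ℂ) *
        ((U : Matrix n n ℂ) * Matrix.diagonal (fun i => (g' i : ℂ)) * star (U : Matrix n n ℂ))
      = (U : Matrix n n ℂ) * Matrix.diagonal (fun i => (g i : ℂ)) *
        (star (U : Matrix n n ℂ) * (U : Matrix n n ℂ)) *
        Matrix.diagonal (fun i => (g' i : ℂ)) * star (U : Matrix n n ℂ) := by noncomm_ring
    _ = (U : Matrix n n ℂ) * (Matrix.diagonal (fun i => (g i : ℂ)) *
        Matrix.diagonal (fun i => (g' i : ℂ))) * star (U : Matrix n n ℂ) := by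
          rw [huu]; noncomm_ring
    _ = _ := by rw [Matrix.diagonal_mul_diagonal]; push_cast; rfl

lemma sand_posSemidef {g : n → ℝ} (hg : ∀ i, 0 ≤ g i) : (sand U g).PosSemidef := by
  unfold sand
  rw [Matrix.star_eq_conjTranspose]
  exact (Matrix.posSemidef_diagonal_iff.mpr fun i => by
    simpa using Complex.zero_le_real.mpr (hg i)).mul_mul_conjTranspose_same _

lemma sand_trace (g : n → ℝ) : (sand U g).trace = ((∑ i, g i : ℝ) : ℂ) := by
  unfold sand
  rw [Matrix.trace_mul_cycle, Unitary.coe_star_mul_self U, Matrix.one_mul,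
    Matrix.trace_diagonal]
  push_cast; rfl

lemma sand_sub (g g' : n → ℝ) : sand U g - sand U g' = sand U (fun i => g i - g' i) := by
  unfold sand
  rw [← Matrix.sub_mul, ← Matrix.mul_sub]
  have : (Matrix.diagonal fun i => ((g i : ℝ) : ℂ)) - (Matrix.diagonal fun i => ((g' i : ℝ) : ℂ))
      = Matrix.diagonal (fun i => ((g i - g' i : ℝ) : ℂ)) := by
    rw [Matrix.diagonal_sub]
    congr 1; funext i; push_cast; ring
  rw [this]

lemma sand_one : sand U (fun _ => 1) = 1 := by
  unfold sand
  simp only [Complex.ofReal_one, Matrix.diagonal_one, Matrix.mul_one]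
  exact Matrix.mem_unitaryGroup_iff.mp U.2

lemma sand_zero : sand U (fun _ => 0) = 0 := by
  unfold sand
  simp

lemma sand_isHermitian (g : n → ℝ) : (sand U g).IsHermitian := by
  unfold sand Matrix.IsHermitian
  simp only [Matrix.star_eq_conjTranspose, Matrix.conjTranspose_mul,
    Matrix.conjTranspose_conjTranspose, Matrix.diagonal_conjTranspose]
  rw [Matrix.mul_assoc]
  congr 2
  funext i
  simp [Pi.star_def, Complex.conj_ofReal]

lemma sand_rank_le (g : n → ℝ) :
    (sand U g).rank ≤ (Finset.univ.filter (fun i => g i ≠ 0)).card := by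
  unfold sand
  refine le_trans (le_trans (Matrix.rank_mul_le_left _ _) (Matrix.rank_mul_le_right _ _)) ?_
  classical
  rw [Matrix.rank_diagonal]
  rw [Fintype.card_subtype]
  apply Finset.card_le_card
  intro i hi
  simp only [Finset.mem_filter, Finset.mem_univ, true_and] at *
  exact fun h => hi (by rw [h]; norm_num)

lemma trace_mul_sand (B : Matrix n n ℂ) (g : n → ℝ) :
    (B * sand U g).trace
      = ((star (U : Matrix n n ℂ) * B * (U : Matrix n n ℂ)) *
          Matrix.diagonal (fun i => (g i : ℂ))).trace := by
  unfold sand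
  rw [show B * ((U : Matrix n n ℂ) * Matrix.diagonal (fun i => (g i : ℂ)) * star (U : Matrix n n ℂ))
      = (B * (U : Matrix n n ℂ)) * Matrix.diagonal (fun i => (g i : ℂ)) * star (U : Matrix n n ℂ)
    from by noncomm_ring]
  rw [Matrix.trace_mul_cycle]
  noncomm_ring

end sand

lemma kyfan_real {n : Type*} [Fintype n] [DecidableEq n] (lam w : n → ℝ) (S : Finset n)
    (hSne : S.Nonempty) (hl : ∀ i, 0 ≤ lam i) (hw0 : ∀ i, 0 ≤ w i) (hw1 : ∀ i, w i ≤ 1)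
    (hmax : ∀ i ∈ S, ∀ j ∉ S, lam j ≤ lam i)
    (hwsum : ∑ i, w i ≤ (S.card : ℝ)) :
    ∑ i, lam i * w i ≤ ∑ i ∈ S, lam i := by
  set m := S.inf' hSne lam with hm
  have hm0 : 0 ≤ m := by
    obtain ⟨i0, hi0, hval⟩ := S.exists_mem_eq_inf' hSne lam
    rw [hm, hval]; exact hl i0
  have hmle : ∀ i ∈ S, m ≤ lam i := fun i hi => Finset.inf'_le _ hi
  have hlem : ∀ j ∉ S, lam j ≤ m := fun j hj =>
    Finset.le_inf' hSne _ (fun i hi => hmax i hi j hj)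
  have hsplit : ∑ i, lam i * w i = ∑ i ∈ S, lam i * w i + ∑ i ∈ Sᶜ, lam i * w i :=
    (Finset.sum_add_sum_compl S _).symm
  have hwsplit : ∑ i, w i = ∑ i ∈ S, w i + ∑ i ∈ Sᶜ, w i :=
    (Finset.sum_add_sum_compl S _).symm
  have h1 : ∑ i ∈ Sᶜ, lam i * w i ≤ m * ∑ i ∈ Sᶜ, w i := by
    rw [Finset.mul_sum]
    refine Finset.sum_le_sum fun i hi => ?_
    exact mul_le_mul_of_nonneg_right (hlem i (Finset.mem_compl.mp hi)) (hw0 i)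
  have h2 : m * ∑ i ∈ Sᶜ, w i ≤ m * ((S.card : ℝ) - ∑ i ∈ S, w i) := by
    apply mul_le_mul_of_nonneg_left _ hm0
    linarith [hwsum, hwsplit]
  have h3 : m * ((S.card : ℝ) - ∑ i ∈ S, w i) ≤ ∑ i ∈ S, lam i - ∑ i ∈ S, lam i * w i := by
    have hcard : m * ((S.card : ℝ) - ∑ i ∈ S, w i) = ∑ i ∈ S, m * (1 - w i) := by
      simp only [mul_sub, mul_one]
      rw [Finset.sum_sub_distrib, Finset.sum_const, nsmul_eq_mul, Finset.mul_sum]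
      ring
    rw [hcard, ← Finset.sum_sub_distrib]
    refine Finset.sum_le_sum fun i hi => ?_
    have h1w : 0 ≤ 1 - w i := by linarith [hw1 i]
    have := mul_le_mul_of_nonneg_right (hmle i hi) h1w
    nlinarith
  linarith [hsplit, h1, h2, h3]

lemma exists_top_subset {d r : ℕ} (hrd : r ≤ d) (lam : Fin d → ℝ) :
    ∃ S : Finset (Fin d), S.card = r ∧ ∀ i ∈ S, ∀ j ∉ S, lam j ≤ lam i := by
  classical
  set σs := Tuple.sort lam with hσ
  refine ⟨(Finset.univ.filter (fun i : Fin d => d - r ≤ (i : ℕ))).image σs, ?_, ?_⟩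
  · rw [Finset.card_image_of_injective _ σs.injective]
    have : (Finset.univ.filter (fun i : Fin d => d - r ≤ (i : ℕ)))
        = Finset.map ⟨fun j : Fin r => (⟨d - r + (j : ℕ), by omega⟩ : Fin d),
            fun a b hab => by
              simp only [Fin.mk.injEq] at hab
              exact Fin.ext (by omega)⟩ Finset.univ := by
      ext i
      simp only [Finset.mem_filter, Finset.mem_univ, true_and, Finset.mem_map,
        Function.Embedding.coeFn_mk]
      constructor
      · intro hi
        refine ⟨⟨(i : ℕ) - (d - r), by omega⟩, ?_⟩
        exact Fin.ext (by show d - r + ((i : ℕ) - (d - r)) = (i : ℕ); omega)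
      · rintro ⟨j, rfl⟩
        simp
        change d ≤ d - r + (j : ℕ) + r; omega
    rw [this, Finset.card_map, Finset.card_univ, Fintype.card_fin]
  · intro i hi j hj
    simp only [Finset.mem_image, Finset.mem_filter, Finset.mem_univ, true_and] at hi hj
    obtain ⟨a, ha, rfl⟩ := hi
    have hj' : ∀ b : Fin d, d - r ≤ (b : ℕ) → σs b ≠ j := by
      intro b hb hbj
      exact hj ⟨b, hb, hbj⟩
    obtain ⟨b, hbj⟩ := σs.surjective j
    have hb : (b : ℕ) < d - r := by
      by_contra h
      exact hj' b (by omega) hbj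
    rw [← hbj]
    have := Tuple.monotone_sort lam
    exact this (show b ≤ a from by rw [Fin.le_def]; omega)

lemma cs_complex {ι : Type*} [Fintype ι] (a b : ι → ℂ) :
    Complex.normSq (∑ x, conj (a x) * b x)
      ≤ (∑ x, Complex.normSq (a x)) * (∑ x, Complex.normSq (b x)) := by
  classical
  let x : EuclideanSpace ℂ ι := (WithLp.equiv 2 _).symm a
  let y : EuclideanSpace ℂ ι := (WithLp.equiv 2 _).symm b
  have hinner : (inner ℂ x y : ℂ) = ∑ i, conj (a i) * b i := by
    simp [x, y, PiLp.inner_apply, RCLike.inner_apply, mul_comm]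
  have hx : ‖x‖ ^ 2 = ∑ i, Complex.normSq (a i) := by
    rw [EuclideanSpace.norm_eq, Real.sq_sqrt (by positivity)]
    exact Finset.sum_congr rfl fun i _ => by
      show ‖a i‖ ^ 2 = _
      rw [Complex.sq_norm]
  have hy : ‖y‖ ^ 2 = ∑ i, Complex.normSq (b i) := by
    rw [EuclideanSpace.norm_eq, Real.sq_sqrt (by positivity)]
    exact Finset.sum_congr rfl fun i _ => by
      show ‖b i‖ ^ 2 = _
      rw [Complex.sq_norm]
  have key := norm_inner_le_norm (𝕜 := ℂ) x y
  have key2 : ‖(inner ℂ x y : ℂ)‖ ^ 2 ≤ (‖x‖ * ‖y‖) ^ 2 := by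
    apply pow_le_pow_left₀ (norm_nonneg _) key
  rw [hinner] at key2
  rw [mul_pow, hx, hy] at key2
  calc Complex.normSq (∑ x, conj (a x) * b x) = ‖∑ x, conj (a x) * b x‖ ^ 2 := by
        rw [Complex.normSq_eq_norm_sq]
    _ ≤ _ := key2

lemma frob_trace {n : Type*} [Fintype n] (A B : Matrix n n ℂ) :
    (Aᴴ * B).trace = ∑ x : n × n, conj (A x.1 x.2) * B x.1 x.2 := by
  rw [Fintype.sum_prod_type]
  simp only [Matrix.trace, Matrix.diag, Matrix.mul_apply, Matrix.conjTranspose_apply]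
  rw [Finset.sum_comm]
  rfl

lemma frob_trace_self {n : Type*} [Fintype n] (A : Matrix n n ℂ) :
    ((A * Aᴴ).trace) = ((∑ x : n × n, Complex.normSq (A x.1 x.2) : ℝ) : ℂ) := by
  rw [Fintype.sum_prod_type]
  simp only [Matrix.trace, Matrix.diag, Matrix.mul_apply, Matrix.conjTranspose_apply]
  push_cast
  refine Finset.sum_congr rfl fun i _ => Finset.sum_congr rfl fun j _ => ?_
  rw [show star (A i j) = conj (A i j) from rfl, Complex.mul_conj]

end Aux


set_option maxHeartbeats 1000000 in
/-- key reduction step in Theorem `thm:schmidt-rank`. -/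
theorem stmt_13 (d r : ℕ) (hd : 1 ≤ d) (hr : 1 ≤ r) (hrd : r ≤ d)
    (ε : ℝ) (hε : ε ∈ Set.Ioc (0 : ℝ) 1)
    (ψ : Fin d × Fin d → ℂ) (hψ : IsUnitVec ψ)
    (hfar : ∀ σ : Matrix (Fin d) (Fin d) ℂ, IsDensity σ → σ.rank ≤ r →
      ε ^ 2 ≤ traceDist (ptraceB (outer ψ)) σ) :
    ∀ φ : Fin d × Fin d → ℂ, IsUnitVec φ → schmidtRank φ ≤ r →
      Complex.normSq (∑ x, conj (φ x) * ψ x) ≤ 1 - ε ^ 2 ∧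
      ε ≤ traceDist (outer ψ) (outer φ) := by
  intro φ hφ hrank
  obtain ⟨hε0, hε1⟩ := hε
  classical
  set Mψ : Matrix (Fin d) (Fin d) ℂ := Matrix.of fun i j : Fin d => ψ (i, j) with hMψ
  set Mφ : Matrix (Fin d) (Fin d) ℂ := Matrix.of fun i j : Fin d => φ (i, j) with hMφ
  set c : ℝ := Complex.normSq (∑ x, conj (φ x) * ψ x) with hc
  -- reduced state of ψ
  have hρeq : ptraceB (outer ψ) = Mψ * Mψᴴ := by
    ext a b
    simp [ptraceB, outer, Matrix.mul_apply, Matrix.conjTranspose_apply, hMψ]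
  set ρ : Matrix (Fin d) (Fin d) ℂ := Mψ * Mψᴴ with hρ
  have hρpsd : ρ.PosSemidef := Matrix.posSemidef_self_mul_conjTranspose Mψ
  have hρH : ρ.IsHermitian := hρpsd.1
  have hρtr : ρ.trace = 1 := by
    rw [hρ, frob_trace_self]
    have : ∑ x : Fin d × Fin d, Complex.normSq (Mψ x.1 x.2) = 1 := by
      rw [← hψ]
      exact Finset.sum_congr rfl fun x _ => by simp [hMψ]
    rw [this]; norm_num
  set lam := hρH.eigenvalues with hlam
  have hlam0 : ∀ i, 0 ≤ lam i := hρpsd.eigenvalues_nonneg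
  have hlamsum : ∑ i, lam i = 1 := by
    have := trace_eq_sum_eigenvalues hρH
    rw [hρtr] at this
    exact_mod_cast this.symm
  obtain ⟨S, hScard, hStop⟩ := exists_top_subset hrd lam
  have hSne : S.Nonempty := Finset.card_pos.mp (by omega)
  set s : ℝ := ∑ i ∈ S, lam i with hs
  set t : ℝ := ∑ i ∈ Sᶜ, lam i with ht
  have hst : s + t = 1 := by rw [hs, ht, Finset.sum_add_sum_compl]; exact hlamsum
  have hs0 : 0 ≤ s := Finset.sum_nonneg fun i _ => hlam0 i
  have ht0 : 0 ≤ t := Finset.sum_nonneg fun i _ => hlam0 i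
  have hs1 : s ≤ 1 := by linarith
  have hspos : 0 < s := by
    rcases lt_or_eq_of_le hs0 with h | h
    · exact h
    · exfalso
      have hallS : ∀ i ∈ S, lam i = 0 := by
        intro i hi
        have := Finset.sum_eq_zero_iff_of_nonneg (fun i _ => hlam0 i) |>.mp h.symm
        exact this i hi
      have hall : ∀ i, lam i = 0 := by
        intro i
        by_cases hi : i ∈ S
        · exact hallS i hi
        · obtain ⟨i0, hi0⟩ := hSne
          have := hStop i0 hi0 i hi
          have := hlam0 i
          have := hallS i0 hi0
          linarith
      rw [Finset.sum_congr rfl (fun i _ => hall i)] at hlamsum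
      simp at hlamsum
  set U := hρH.eigenvectorUnitary with hUdef
  have hρsand : ρ = sand U lam := by
    rw [sand]
    conv_lhs => rw [hρH.spectral_theorem]
    rfl
  -- the truncated density matrix
  set gσ : Fin d → ℝ := fun i => if i ∈ S then lam i / s else 0 with hgσ
  set σm := sand U gσ with hσm
  have hσpsd : σm.PosSemidef := sand_posSemidef U fun i => by
    rw [hgσ]; dsimp only; split
    · exact div_nonneg (hlam0 _) hs0
    · exact le_refl 0
  have hσtr : σm.trace = 1 := by
    rw [hσm, sand_trace]
    have : ∑ i, gσ i = 1 := by
      rw [hgσ]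
      rw [Finset.sum_ite_mem, Finset.univ_inter, ← Finset.sum_div]
      exact div_self (ne_of_gt hspos)
    rw [this]; norm_num
  have hσrank : σm.rank ≤ r := by
    refine le_trans (sand_rank_le U gσ) ?_
    refine le_trans (Finset.card_le_card ?_) hScard.le
    intro i hi
    simp only [Finset.mem_filter, Finset.mem_univ, true_and, hgσ] at hi ⊢
    by_contra hiS
    exact hi (by simp [hiS])
  have hεt : ε ^ 2 ≤ t := by
    have hfar' := hfar σm ⟨hσpsd, hσtr⟩ hσrank
    set gA : Fin d → ℝ := fun i => if i ∈ S then 0 else lam i with hgA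
    set gB : Fin d → ℝ := fun i => if i ∈ S then lam i / s - lam i else 0 with hgB
    have hA : (sand U gA).PosSemidef := sand_posSemidef U fun i => by
      rw [hgA]; dsimp only; split
      · exact le_refl 0
      · exact hlam0 i
    have hB : (sand U gB).PosSemidef := sand_posSemidef U fun i => by
      rw [hgB]; dsimp only; split
      · have h1 : lam i ≤ lam i / s := by
          rw [le_div_iff₀ hspos]
          nlinarith [hlam0 i]
        linarith
      · exact le_refl 0
    have hdiff : ptraceB (outer ψ) - σm = sand U gA - sand U gB := by
      rw [hρeq, hρsand, hσm, sand_sub, sand_sub]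
      refine congrArg (sand U) (funext fun i => ?_)
      by_cases hi : i ∈ S <;> simp [hi, hgσ, hgA, hgB] <;> ring
    have hHerm : (ptraceB (outer ψ) - σm).IsHermitian := by
      rw [hdiff]
      exact (sand_isHermitian U gA).sub (sand_isHermitian U gB)
    have htrA : ((sand U gA).trace).re = t := by
      rw [sand_trace, Complex.ofReal_re, ht]
      have : ∀ i, gA i = if i ∈ Sᶜ then lam i else 0 := by
        intro i
        rw [hgA]
        by_cases hi : i ∈ S <;> simp [hi]
      rw [Finset.sum_congr rfl fun i _ => this i, Finset.sum_ite_mem, Finset.univ_inter]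
    have htrB : ((sand U gB).trace).re = t := by
      rw [sand_trace, Complex.ofReal_re]
      rw [hgB]
      rw [Finset.sum_ite_mem, Finset.univ_inter, Finset.sum_sub_distrib, ← Finset.sum_div]
      rw [← hs, div_self (ne_of_gt hspos)]
      linarith
    have hbound := sum_abs_eigenvalues_le hdiff hA hB hHerm
    rw [htrA, htrB] at hbound
    have : traceDist (ptraceB (outer ψ)) σm ≤ t := by
      rw [traceDist, dif_pos hHerm]
      linarith
    linarith
  -- the projector onto the support of the reduced state of φ
  set ρφ : Matrix (Fin d) (Fin d) ℂ := Mφ * Mφᴴ with hρφ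
  have hφpsd : ρφ.PosSemidef := Matrix.posSemidef_self_mul_conjTranspose Mφ
  have hφH : ρφ.IsHermitian := hφpsd.1
  set mu := hφH.eigenvalues with hmu
  set V := hφH.eigenvectorUnitary with hV
  have hφsand : ρφ = sand V mu := by
    rw [sand]
    conv_lhs => rw [hφH.spectral_theorem]
    rfl
  set indf : Fin d → ℝ := fun i => if mu i ≠ 0 then 1 else 0 with hind
  set P := sand V indf with hP
  have hPpsd : P.PosSemidef := sand_posSemidef V fun i => by
    rw [hind]; dsimp only; split
    · exact zero_le_one
    · exact le_refl 0
  have h1P : (1 : Matrix (Fin d) (Fin d) ℂ) - P = sand V (fun i => 1 - indf i) := by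
    rw [hP, ← sand_one V, sand_sub]
  have h1Ppsd : ((1 : Matrix (Fin d) (Fin d) ℂ) - P).PosSemidef := by
    rw [h1P]
    exact sand_posSemidef V fun i => by
      rw [hind]; dsimp only; split
      · norm_num
      · norm_num
  have hPP : P * P = P := by
    rw [hP, sand_mul_sand]
    refine congrArg (sand V) (funext fun i => ?_)
    rw [hind]; dsimp only; split <;> ring
  have hPherm : P.IsHermitian := sand_isHermitian V indf
  have h1Pherm : ((1 : Matrix (Fin d) (Fin d) ℂ) - P).IsHermitian := by
    rw [h1P]; exact sand_isHermitian V _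
  have hPMφ : P * Mφ = Mφ := by
    have hNN : (((1 : Matrix (Fin d) (Fin d) ℂ) - P) * Mφ) *
        (((1 : Matrix (Fin d) (Fin d) ℂ) - P) * Mφ)ᴴ = 0 := by
      rw [Matrix.conjTranspose_mul]
      rw [show ((1 : Matrix (Fin d) (Fin d) ℂ) - P) * Mφ *
          (Mφᴴ * ((1 : Matrix (Fin d) (Fin d) ℂ) - P)ᴴ)
        = ((1 : Matrix (Fin d) (Fin d) ℂ) - P) * (Mφ * Mφᴴ) *
          ((1 : Matrix (Fin d) (Fin d) ℂ) - P)ᴴ from by noncomm_ring]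
      rw [h1Pherm.eq, ← hρφ, hφsand, h1P, sand_mul_sand, sand_mul_sand]
      refine Eq.trans (congrArg (sand V) (funext fun i => ?_)) (sand_zero V)
      by_cases h : mu i = 0 <;> simp [hind, h]
    have hN : ((1 : Matrix (Fin d) (Fin d) ℂ) - P) * Mφ = 0 :=
      Matrix.self_mul_conjTranspose_eq_zero.mp hNN
    have hexp : ((1 : Matrix (Fin d) (Fin d) ℂ) - P) * Mφ = Mφ - P * Mφ := by
      rw [Matrix.sub_mul, Matrix.one_mul]
    rw [hexp] at hN
    linear_combination (norm := noncomm_ring) -hN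
  -- the inner product identity ⟨φ, ψ⟩ = tr (Mφᴴ (P Mψ))
  have e0 : ∑ x, conj (φ x) * ψ x = ((Mφᴴ * Mψ).trace) := by
    rw [frob_trace]
    refine Finset.sum_congr rfl fun x _ => ?_
    rw [hMφ, hMψ]
    simp
  have e1 : Mφᴴ * (P * Mψ) = Mφᴴ * Mψ := by
    rw [← Matrix.mul_assoc]
    congr 1
    calc Mφᴴ * P = Mφᴴ * Pᴴ := by rw [hPherm.eq]
      _ = (P * Mφ)ᴴ := by rw [← Matrix.conjTranspose_mul]
      _ = Mφᴴ := by rw [hPMφ]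
  have hip : ∑ x, conj (φ x) * ψ x = ((Mφᴴ * (P * Mψ)).trace) := by rw [e1, e0]
  -- Cauchy–Schwarz : c ≤ tr (P ρ)
  set pr : ℝ := ((P * ρ).trace).re with hpr
  have hcs : c ≤ pr := by
    have h1 : c = Complex.normSq (∑ x : Fin d × Fin d,
        conj (Mφ x.1 x.2) * (P * Mψ) x.1 x.2) := by
      rw [hc, hip, frob_trace]
    have h2 := cs_complex (fun x : Fin d × Fin d => Mφ x.1 x.2)
      (fun x : Fin d × Fin d => (P * Mψ) x.1 x.2)
    have h3 : ∑ x : Fin d × Fin d, Complex.normSq (Mφ x.1 x.2) = 1 := by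
      rw [← hφ]
      exact Finset.sum_congr rfl fun x _ => by simp [hMφ]
    have h4 : ∑ x : Fin d × Fin d, Complex.normSq ((P * Mψ) x.1 x.2)
        = (((P * Mψ) * (P * Mψ)ᴴ).trace).re := by
      rw [frob_trace_self, Complex.ofReal_re]
    have h5 : ((P * Mψ) * (P * Mψ)ᴴ).trace = (P * ρ).trace := by
      rw [Matrix.conjTranspose_mul]
      rw [show P * Mψ * (Mψᴴ * Pᴴ) = P * (Mψ * Mψᴴ) * Pᴴ from by noncomm_ring]
      rw [hPherm.eq, Matrix.trace_mul_cycle, ← Matrix.mul_assoc, hPP, hρ, Matrix.mul_assoc]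
    rw [h1]
    calc Complex.normSq (∑ x : Fin d × Fin d, conj (Mφ x.1 x.2) * (P * Mψ) x.1 x.2)
        ≤ (∑ x : Fin d × Fin d, Complex.normSq (Mφ x.1 x.2)) *
          (∑ x : Fin d × Fin d, Complex.normSq ((P * Mψ) x.1 x.2)) := h2
      _ = pr := by rw [h3, h4, h5, one_mul, hpr]
  -- Ky Fan : tr (P ρ) ≤ s
  set W := star (U : Matrix (Fin d) (Fin d) ℂ) * P * (U : Matrix (Fin d) (Fin d) ℂ) with hW
  set w : Fin d → ℝ := fun i => (W i i).re with hw
  have hWpsd : W.PosSemidef := hPpsd.conjTranspose_mul_mul_same _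
  have hw0 : ∀ i, 0 ≤ w i := fun i => (Complex.le_def.mp (psd_diag_nonneg hWpsd i)).1
  have h1W : (1 : Matrix (Fin d) (Fin d) ℂ) - W
      = star (U : Matrix (Fin d) (Fin d) ℂ) * ((1 : Matrix (Fin d) (Fin d) ℂ) - P) *
        (U : Matrix (Fin d) (Fin d) ℂ) := by
    rw [Matrix.mul_sub, Matrix.sub_mul, Matrix.mul_one, star_mul_self_one U, hW]
  have h1Wpsd : ((1 : Matrix (Fin d) (Fin d) ℂ) - W).PosSemidef := by
    rw [h1W]
    exact h1Ppsd.conjTranspose_mul_mul_same _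
  have hw1 : ∀ i, w i ≤ 1 := by
    intro i
    have := (Complex.le_def.mp (psd_diag_nonneg h1Wpsd i)).1
    simp only [Matrix.sub_apply, Matrix.one_apply_eq, Complex.sub_re, Complex.one_re, Complex.zero_re] at this
    show (W i i).re ≤ 1
    linarith
  have hkcard : ∑ i, indf i = ((Finset.univ.filter (fun i => mu i ≠ 0)).card : ℝ) := by
    simp only [hind]
    rw [Finset.sum_boole]
  have hrankeq : (Finset.univ.filter (fun i => mu i ≠ 0)).card = schmidtRank φ := by
    have h1 : ρφ.rank = Fintype.card {i // mu i ≠ 0} := hφH.rank_eq_card_non_zero_eigs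
    have h2 : ρφ.rank = Mφ.rank := Matrix.rank_self_mul_conjTranspose Mφ
    have h3 : schmidtRank φ = Mφ.rank := rfl
    rw [Fintype.card_subtype] at h1
    omega
  have hwsum : ∑ i, w i ≤ (S.card : ℝ) := by
    have htrW : ∑ i, w i = (P.trace).re := by
      have : W.trace = P.trace := trace_conj_unitary U P
      rw [hw]
      calc ∑ i, (W i i).re = (W.trace).re := by
            rw [Matrix.trace]; rw [Complex.re_sum]; rfl
        _ = (P.trace).re := by rw [this]
    have htrP : (P.trace).re = ∑ i, indf i := by
      rw [hP, sand_trace, Complex.ofReal_re]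
    rw [htrW, htrP, hkcard, hScard]
    have := hrankeq
    have : (Finset.univ.filter (fun i => mu i ≠ 0)).card ≤ r := by omega
    exact_mod_cast this
  have hprw : pr = ∑ i, lam i * w i := by
    rw [hpr, hρsand, trace_mul_sand, ← hW]
    have : (W * Matrix.diagonal fun i => ((lam i : ℝ) : ℂ)).trace
        = ∑ i, W i i * ((lam i : ℝ) : ℂ) := by
      rw [Matrix.trace]
      refine Finset.sum_congr rfl fun i _ => ?_
      rw [Matrix.diag]
      rw [Matrix.mul_diagonal]
    rw [this, Complex.re_sum]
    refine Finset.sum_congr rfl fun i _ => ?_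
    rw [hw]
    simp [Complex.mul_re]
    ring
  have hkf : pr ≤ s := by
    rw [hprw, hs]
    exact kyfan_real lam w S hSne hlam0 hw0 hw1 hStop hwsum
  -- conclusion
  have hpart1 : c ≤ 1 - ε ^ 2 := by
    have : c ≤ s := le_trans hcs hkf
    linarith
  refine ⟨hpart1, ?_⟩
  have hH2 : (outer ψ - outer φ).IsHermitian := (outer_isHermitian ψ).sub (outer_isHermitian φ)
  have hψ' : ∑ x, Complex.normSq (ψ x) = 1 := hψ
  have hφ' : ∑ x, Complex.normSq (φ x) = 1 := hφ
  have hb := part2_bound ψ φ hψ' hφ' hH2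
  rw [traceDist, dif_pos hH2]
  have hsumnn : 0 ≤ ∑ i, |hH2.eigenvalues i| := Finset.sum_nonneg fun i _ => abs_nonneg _
  have h4 : (2 * ε) ^ 2 ≤ (∑ i, |hH2.eigenvalues i|) ^ 2 := by nlinarith
  have h5 : 2 * ε ≤ ∑ i, |hH2.eigenvalues i| := by
    by_contra hcon
    push_neg at hcon
    nlinarith
  linarith


end PaperStmt
end

section
/- Sample lower bound for productness testing (Theorem thm:product, explicit form): Let d ≥ 2, ε ∈ (0, 1), and N ≥ 1. Suppose T is a matrix indexed by (Fin N → Fin d × Fin d) with 0 ⊑ T ⊑ 1 (Loewner) such that (completeness) tr(T * (ψψ†)^{⊗N}) ≥ 2/3 for every product unit vector ψ, i.e., every unit ψ : (Fin d × Fin d) → ℂ of the form ψ (i,j) = a i * b j for some a, b : Fin d → ℂ, and (soundness) tr(T * (ψψ†)^{⊗N}) ≤ 1/3 for every unit ψ satisfying d_tr(ψψ†, φφ†) ≥ ε for every product unit vector φ. Then N ≥ 1/(9ε²). -/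
open scoped ComplexConjugate ComplexOrder Kronecker Matrix
open MeasureTheory

namespace PaperStmt

section Helpers

variable {ι : Type*} [Fintype ι] [DecidableEq ι]

lemma inner_equiv_symm' {ι : Type*} [Fintype ι] (x y : ι → ℂ) :
    inner ℂ ((WithLp.equiv 2 (ι → ℂ)).symm x) ((WithLp.equiv 2 (ι → ℂ)).symm y) = star x ⬝ᵥ y :=
  (dotProduct_comm _ _).symm

/-- Cauchy-Schwarz for complex dot products. -/
lemma cs {ι : Type*} [Fintype ι] (u v : ι → ℂ) :
    ‖star u ⬝ᵥ v‖ ^ 2 ≤ (star u ⬝ᵥ u).re * (star v ⬝ᵥ v).re := by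
  have h := norm_inner_le_norm (𝕜 := ℂ) ((WithLp.equiv 2 (ι → ℂ)).symm u)
    ((WithLp.equiv 2 (ι → ℂ)).symm v)
  rw [inner_equiv_symm'] at h
  have hu : (star u ⬝ᵥ u).re = ‖(WithLp.equiv 2 (ι → ℂ)).symm u‖ ^ 2 := by
    rw [← inner_equiv_symm', ← inner_self_eq_norm_sq (𝕜 := ℂ)]; rfl
  have hv : (star v ⬝ᵥ v).re = ‖(WithLp.equiv 2 (ι → ℂ)).symm v‖ ^ 2 := by
    rw [← inner_equiv_symm', ← inner_self_eq_norm_sq (𝕜 := ℂ)]; rfl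
  rw [hu, hv]
  calc ‖star u ⬝ᵥ v‖ ^ 2 ≤ (‖(WithLp.equiv 2 (ι → ℂ)).symm u‖ * ‖(WithLp.equiv 2 (ι → ℂ)).symm v‖) ^ 2 := by
        apply pow_le_pow_left₀ (norm_nonneg _) h
    _ = _ := by ring

lemma star_dot_comm {ι : Type*} [Fintype ι] (u v : ι → ℂ) :
    star u ⬝ᵥ v = conj (star v ⬝ᵥ u) := by
  simp [dotProduct, Finset.sum_apply, map_sum, mul_comm]

lemma dot_self_re_nonneg {ι : Type*} [Fintype ι] (u : ι → ℂ) : 0 ≤ (star u ⬝ᵥ u).re := by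
  simp only [dotProduct, Complex.re_sum, Pi.star_apply]
  apply Finset.sum_nonneg
  intro i _
  rw [RCLike.star_def, ← Complex.normSq_eq_conj_mul_self]
  exact Complex.normSq_nonneg _



variable {ι : Type*} [Fintype ι] [DecidableEq ι]

/-- Cauchy–Schwarz for a PSD sesquilinear form. -/
lemma psd_cs {P : Matrix ι ι ℂ} (hP : P.PosSemidef) (u v : ι → ℂ) :
    ‖star u ⬝ᵥ (P *ᵥ v)‖ ^ 2 ≤ (star u ⬝ᵥ (P *ᵥ u)).re * (star v ⬝ᵥ (P *ᵥ v)).re := by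
  obtain ⟨B, hB⟩ := (by open scoped MatrixOrder in
    exact CStarAlgebra.nonneg_iff_eq_star_mul_self.mp hP.nonneg : ∃ B : Matrix ι ι ℂ, P = star B * B)
  rw [Matrix.star_eq_conjTranspose] at hB
  subst hB
  have key : ∀ w w' : ι → ℂ, star w ⬝ᵥ ((Bᴴ * B) *ᵥ w') = star (B *ᵥ w) ⬝ᵥ (B *ᵥ w') := by
    intro w w'
    rw [← Matrix.mulVec_mulVec, Matrix.dotProduct_mulVec, Matrix.star_mulVec]
  rw [key, key, key]
  exact cs _ _

lemma trace_mul_outer {T : Matrix ι ι ℂ} (ψ : ι → ℂ) :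
    (T * outer ψ).trace = star ψ ⬝ᵥ (T *ᵥ ψ) := by
  simp only [Matrix.trace, Matrix.diag, Matrix.mul_apply, outer, Matrix.of_apply,
    dotProduct, Matrix.mulVec, Pi.star_apply, RCLike.star_def]
  congr 1; ext x
  rw [Finset.mul_sum]
  congr 1; ext y
  ring

lemma outer_mulVec (x w : ι → ℂ) : outer x *ᵥ w = (star x ⬝ᵥ w) • x := by
  funext a
  simp only [Matrix.mulVec, outer, Matrix.of_apply, dotProduct, Pi.smul_apply,
    Pi.star_apply, smul_eq_mul, Finset.sum_mul, Finset.mul_sum, RCLike.star_def]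
  congr 1; ext y; ring

lemma dot_outer_self' (x w : ι → ℂ) :
    star w ⬝ᵥ (outer x *ᵥ w) = (Complex.normSq (star x ⬝ᵥ w) : ℂ) := by
  rw [outer_mulVec, dotProduct_smul]
  have : star w ⬝ᵥ x = conj (star x ⬝ᵥ w) := star_dot_comm _ _
  rw [smul_eq_mul, this, mul_comm, ← Complex.normSq_eq_conj_mul_self]

lemma dot_self_real (w : ι → ℂ) :
    star w ⬝ᵥ w = ((∑ i, Complex.normSq (w i) : ℝ) : ℂ) := by
  push_cast
  simp only [dotProduct, Pi.star_apply, RCLike.star_def]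
  congr 1; ext i
  rw [Complex.normSq_eq_conj_mul_self]

lemma dot_outer_self (x w : ι → ℂ) :
    (star w ⬝ᵥ (outer x *ᵥ w)).re = ‖star x ⬝ᵥ w‖ ^ 2 := by
  rw [outer_mulVec, dotProduct_smul]
  have : star w ⬝ᵥ x = conj (star x ⬝ᵥ w) := star_dot_comm _ _
  rw [smul_eq_mul, this, mul_comm, ← Complex.normSq_eq_conj_mul_self,
    Complex.ofReal_re, Complex.normSq_eq_norm_sq]

lemma outer_isHermitian_s17 (x : ι → ℂ) : (outer x).IsHermitian := by
  ext a b
  simp [outer, Matrix.conjTranspose_apply, mul_comm]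

lemma outer_posSemidef (x : ι → ℂ) : (outer x).PosSemidef := by
  refine Matrix.PosSemidef.of_dotProduct_mulVec_nonneg (outer_isHermitian_s17 x) fun w => ?_
  rw [dot_outer_self']
  rw [Complex.zero_le_real]
  exact Complex.normSq_nonneg _

lemma one_sub_outer_posSemidef (x : ι → ℂ) (hx : star x ⬝ᵥ x = 1) :
    ((1 : Matrix ι ι ℂ) - outer x).PosSemidef := by
  refine Matrix.PosSemidef.of_dotProduct_mulVec_nonneg ?_ fun w => ?_
  · have := outer_isHermitian_s17 x
    unfold Matrix.IsHermitian at *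
    rw [Matrix.conjTranspose_sub, this, Matrix.conjTranspose_one]
  · rw [Matrix.sub_mulVec, dotProduct_sub, Matrix.one_mulVec, dot_outer_self',
      dot_self_real, ← Complex.ofReal_sub, Complex.zero_le_real, sub_nonneg]
    have h := cs x w
    rw [hx] at h
    simp only [Complex.one_re] at h
    have h2 : (star w ⬝ᵥ w).re = ∑ i, Complex.normSq (w i) := by
      rw [dot_self_real, Complex.ofReal_re]
    rw [h2, one_mul] at h
    calc Complex.normSq (star x ⬝ᵥ w) = ‖star x ⬝ᵥ w‖ ^ 2 := by
          rw [Complex.normSq_eq_norm_sq]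
      _ ≤ _ := h

lemma herm_dot_comm {P : Matrix ι ι ℂ} (hP : P.IsHermitian) (w w' : ι → ℂ) :
    star w' ⬝ᵥ (P *ᵥ w) = conj (star w ⬝ᵥ (P *ᵥ w')) := by
  simp only [dotProduct, Matrix.mulVec, map_sum, Finset.mul_sum, map_mul,
    Pi.star_apply, RCLike.star_def, Complex.conj_conj]
  rw [Finset.sum_comm]
  congr 1; ext a; congr 1; ext b
  have hab : P a b = conj (P b a) := by
    conv_lhs => rw [← hP]
    simp [Matrix.conjTranspose_apply]
  rw [hab]
  simp only [Complex.conj_conj]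
  ring

lemma complex_re_nonneg_of_le {z : ℂ} (h : 0 ≤ z) : 0 ≤ z.re := by
  rw [Complex.le_def] at h
  simpa using h.1

/-- Key lemma: a two-outcome measurement can distinguish two unit vectors
with advantage at most `√(1-|⟨v,u⟩|²)`. -/
lemma key {P : Matrix ι ι ℂ} (hP1 : P.PosSemidef) (hP2 : ((1 : Matrix ι ι ℂ) - P).PosSemidef)
    {u v : ι → ℂ} (hu : star u ⬝ᵥ u = 1) (hv : star v ⬝ᵥ v = 1)
    (hc : ‖star v ⬝ᵥ u‖ < 1) :
    (star u ⬝ᵥ (P *ᵥ u)).re - (star v ⬝ᵥ (P *ᵥ v)).re ≤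
      Real.sqrt (1 - ‖star v ⬝ᵥ u‖ ^ 2) := by
  set c : ℂ := star v ⬝ᵥ u with hcdef
  set k : ℝ := ‖c‖ with hkdef
  have hk0 : 0 ≤ k := norm_nonneg _
  have hk2 : (0:ℝ) < 1 - k ^ 2 := by nlinarith
  set s : ℝ := Real.sqrt (1 - k ^ 2) with hsdef
  have hs0 : 0 < s := Real.sqrt_pos.mpr hk2
  have hs2 : s ^ 2 = 1 - k ^ 2 := Real.sq_sqrt hk2.le
  have hsne : (s : ℂ) ≠ 0 := by
    simp only [ne_eq, Complex.ofReal_eq_zero]; exact hs0.ne'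
  set Ξ : ι → ℂ := (s : ℂ)⁻¹ • (u - c • v) with hXdef
  have hcc : conj c * c = ((k ^ 2 : ℝ) : ℂ) := by
    rw [← Complex.normSq_eq_conj_mul_self, hkdef]
    norm_cast
    rw [Complex.normSq_eq_norm_sq]
  have huv : star u ⬝ᵥ v = conj c := by rw [hcdef, star_dot_comm]
  have hvX : star v ⬝ᵥ Ξ = 0 := by
    rw [hXdef, dotProduct_smul, dotProduct_sub, dotProduct_smul, hv]
    simp [hcdef]
  have hXX : star Ξ ⬝ᵥ Ξ = 1 := by
    rw [hXdef, star_smul, smul_dotProduct, dotProduct_smul]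
    have hsub : star (u - c • v) ⬝ᵥ (u - c • v) = ((1 - k ^ 2 : ℝ) : ℂ) := by
      simp only [star_sub, star_smul, sub_dotProduct, dotProduct_sub,
        smul_dotProduct, dotProduct_smul, smul_eq_mul, RCLike.star_def]
      rw [hu, hv, huv, ← hcdef]
      linear_combination (norm := (push_cast; ring1)) -hcc
    rw [hsub]
    have hst : star ((s:ℂ)⁻¹) = ((s:ℂ))⁻¹ := by
      rw [RCLike.star_def, ← Complex.ofReal_inv, Complex.conj_ofReal]
    rw [hst, smul_eq_mul, smul_eq_mul, ← mul_assoc]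
    have hss : ((1 - k ^ 2 : ℝ) : ℂ) = (s:ℂ) * (s:ℂ) := by
      have : (s:ℂ) * (s:ℂ) = ((s^2:ℝ):ℂ) := by push_cast; ring
      rw [this, hs2]
    rw [hss]
    field_simp
  have hdecomp : u = c • v + (s : ℂ) • Ξ := by
    rw [hXdef, smul_smul, mul_inv_cancel₀ hsne, one_smul]
    funext i
    simp only [Pi.add_apply, Pi.sub_apply, Pi.smul_apply, smul_eq_mul]
    ring
  -- expand the quadratic form
  set B : ℂ := star v ⬝ᵥ (P *ᵥ Ξ) with hBdef
  set t : ℝ := ‖B‖ with htdef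
  set a : ℝ := (star v ⬝ᵥ (P *ᵥ v)).re with hadef
  set b : ℝ := (star Ξ ⬝ᵥ (P *ᵥ Ξ)).re with hbdef
  have hBconj : star Ξ ⬝ᵥ (P *ᵥ v) = conj B := by
    rw [hBdef, herm_dot_comm hP1.1]
  have expand : star u ⬝ᵥ (P *ᵥ u) =
      conj c * c * (star v ⬝ᵥ (P *ᵥ v)) + conj c * (s:ℂ) * B
        + (s:ℂ) * c * conj B + (s:ℂ) * (s:ℂ) * (star Ξ ⬝ᵥ (P *ᵥ Ξ)) := by
    conv_lhs => rw [hdecomp]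
    rw [← hBconj, hBdef]
    simp only [Matrix.mulVec_add, Matrix.mulVec_smul, dotProduct_add,
      add_dotProduct, star_add, star_smul, smul_dotProduct,
      dotProduct_smul, smul_eq_mul, RCLike.star_def]
    have : (starRingEnd ℂ) ((s:ℂ)) = (s:ℂ) := Complex.conj_ofReal s
    rw [this]
    ring
  have hre : (star u ⬝ᵥ (P *ᵥ u)).re = k ^ 2 * a + s * s * b + 2 * s * (conj c * B).re := by
    rw [expand]
    simp only [Complex.add_re]
    rw [hcc]
    have h1 : (((k ^ 2 : ℝ) : ℂ) * (star v ⬝ᵥ (P *ᵥ v))).re = k ^ 2 * a := by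
      rw [Complex.re_ofReal_mul, hadef]
    have h4 : ((s:ℂ) * (s:ℂ) * (star Ξ ⬝ᵥ (P *ᵥ Ξ))).re = s * s * b := by
      rw [mul_assoc, Complex.re_ofReal_mul, Complex.re_ofReal_mul, hbdef]; ring
    have h23 : (conj c * (s:ℂ) * B).re + ((s:ℂ) * c * conj B).re
        = 2 * s * (conj c * B).re := by
      have : (s:ℂ) * c * conj B = conj (conj c * (s:ℂ) * B) := by
        simp only [map_mul, Complex.conj_conj, Complex.conj_ofReal]
        ring
      rw [this, Complex.conj_re]
      have : conj c * (s:ℂ) * B = (s:ℂ) * (conj c * B) := by ring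
      rw [this, Complex.re_ofReal_mul]
      ring
    rw [h1, h4]
    linarith [h23]
  -- bounds on a, b, t
  have ha0 : 0 ≤ a := complex_re_nonneg_of_le (hP1.dotProduct_mulVec_nonneg v)
  have hb0 : 0 ≤ b := complex_re_nonneg_of_le (hP1.dotProduct_mulVec_nonneg Ξ)
  have hsubv : star v ⬝ᵥ (((1 : Matrix ι ι ℂ) - P) *ᵥ v) = star v ⬝ᵥ v - star v ⬝ᵥ (P *ᵥ v) := by
    rw [Matrix.sub_mulVec, dotProduct_sub, Matrix.one_mulVec]
  have hsubX : star Ξ ⬝ᵥ (((1 : Matrix ι ι ℂ) - P) *ᵥ Ξ) = star Ξ ⬝ᵥ Ξ - star Ξ ⬝ᵥ (P *ᵥ Ξ) := by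
    rw [Matrix.sub_mulVec, dotProduct_sub, Matrix.one_mulVec]
  have ha1 : a ≤ 1 := by
    have := complex_re_nonneg_of_le (hP2.dotProduct_mulVec_nonneg v)
    rw [hsubv, hv] at this
    simp only [Complex.sub_re, Complex.one_re] at this
    linarith
  have hb1 : b ≤ 1 := by
    have := complex_re_nonneg_of_le (hP2.dotProduct_mulVec_nonneg Ξ)
    rw [hsubX, hXX] at this
    simp only [Complex.sub_re, Complex.one_re] at this
    linarith
  have ht2ab : t ^ 2 ≤ a * b := psd_cs hP1 v Ξ
  have ht2ab' : t ^ 2 ≤ (1 - a) * (1 - b) := by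
    have h := psd_cs hP2 v Ξ
    have hL : star v ⬝ᵥ (((1 : Matrix ι ι ℂ) - P) *ᵥ Ξ) = -B := by
      rw [Matrix.sub_mulVec, dotProduct_sub, Matrix.one_mulVec, hvX, hBdef]
      ring
    rw [hL, hsubv, hsubX, hv, hXX] at h
    simp only [norm_neg, Complex.sub_re, Complex.one_re] at h
    exact h
  have ht0 : 0 ≤ t := norm_nonneg _
  have hcB : (conj c * B).re ≤ k * t := by
    calc (conj c * B).re ≤ ‖conj c * B‖ := Complex.re_le_norm _
      _ = k * t := by rw [norm_mul]; simp [hkdef, htdef]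
  -- final elementary inequality
  have main : s * (b - a) + 2 * k * t ≤ 1 := by
    rcases le_or_gt (a + b) 1 with hab | hab
    · nlinarith [sq_nonneg (s * (2 * t) - k * (b - a)), sq_nonneg (s * (b - a) + 2 * k * t - 1),
        sq_nonneg (s * (b - a) + 2 * k * t), sq_nonneg (a + b), mul_nonneg hk0 ht0,
        mul_nonneg hs0.le (sub_nonneg.mpr hb0)]
    · nlinarith [sq_nonneg (s * (2 * t) - k * (b - a)), sq_nonneg (s * (b - a) + 2 * k * t - 1),
        sq_nonneg (2 - a - b), mul_nonneg hk0 ht0]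
  rw [hre]
  have hks : k ^ 2 = 1 - s ^ 2 := by linarith
  nlinarith [mul_le_mul_of_nonneg_left main hs0.le, mul_le_mul_of_nonneg_left hcB hs0.le]


lemma trace_sq_eq_sum_sq_s17 {A : Matrix ι ι ℂ} (hA : A.IsHermitian) :
    ((A * A).trace).re = ∑ i, (hA.eigenvalues i) ^ 2 := by
  set V : Matrix ι ι ℂ := (hA.eigenvectorUnitary : Matrix ι ι ℂ) with hV
  set D : Matrix ι ι ℂ := Matrix.diagonal (RCLike.ofReal ∘ hA.eigenvalues) with hD
  have hsV : star V * V = 1 := by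
    exact Matrix.mem_unitaryGroup_iff'.mp hA.eigenvectorUnitary.2
  have hAeq : A = V * D * star V := by
    have := hA.spectral_theorem
    rwa [Unitary.conjStarAlgAut_apply] at this
  have h1 : A * A = V * (D * D) * star V := by
    rw [hAeq]
    rw [show V * D * star V * (V * D * star V) = V * D * (star V * V) * D * star V by
      noncomm_ring]
    rw [hsV]
    noncomm_ring
  have h2 : (A * A).trace = (D * D).trace := by
    rw [h1, Matrix.trace_mul_cycle, ← Matrix.mul_assoc, hsV, Matrix.one_mul]
  rw [h2, hD, Matrix.diagonal_mul_diagonal, Matrix.trace_diagonal]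
  rw [Complex.re_sum]
  congr 1; ext i
  simp [Function.comp, ← Complex.ofReal_mul, sq]

lemma unit_eigvec {A : Matrix ι ι ℂ} (hA : A.IsHermitian) (i : ι) :
    star ⇑(hA.eigenvectorBasis i) ⬝ᵥ ⇑(hA.eigenvectorBasis i) = 1 := by
  have h := hA.eigenvectorBasis.orthonormal.1 i
  have h2 : (inner (𝕜 := ℂ) (hA.eigenvectorBasis i) (hA.eigenvectorBasis i)) = 1 := by
    rw [inner_self_eq_norm_sq_to_K, h]
    norm_num
  rw [EuclideanSpace.inner_eq_star_dotProduct] at h2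
  rw [dotProduct_comm]
  exact h2

lemma trace_outer_mul_outer_s17 (u v : ι → ℂ) :
    (outer u * outer v).trace = (star u ⬝ᵥ v) * (star v ⬝ᵥ u) := by
  rw [trace_mul_outer, outer_mulVec, dotProduct_smul, smul_eq_mul, mul_comm]

lemma norm_dot_comm (u v : ι → ℂ) : ‖star u ⬝ᵥ v‖ = ‖star v ⬝ᵥ u‖ := by
  rw [star_dot_comm]
  exact RCLike.norm_conj _

/-- Trace distance between outer products of unit vectors is at least `√(1-|⟨φ,ψ⟩|²)`. -/
lemma traceDist_outer_ge {ψ φ : ι → ℂ} (hψ : star ψ ⬝ᵥ ψ = 1) (hφ : star φ ⬝ᵥ φ = 1)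
    (hk : ‖star φ ⬝ᵥ ψ‖ < 1) :
    Real.sqrt (1 - ‖star φ ⬝ᵥ ψ‖ ^ 2) ≤ traceDist (outer ψ) (outer φ) := by
  set k : ℝ := ‖star φ ⬝ᵥ ψ‖ with hkdef
  have hk0 : 0 ≤ k := norm_nonneg _
  have hk2 : (0:ℝ) < 1 - k ^ 2 := by nlinarith
  set s : ℝ := Real.sqrt (1 - k ^ 2) with hsdef
  have hs0 : 0 < s := Real.sqrt_pos.mpr hk2
  have hs2 : s ^ 2 = 1 - k ^ 2 := Real.sq_sqrt hk2.le
  have hΔ : (outer ψ - outer φ).IsHermitian :=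
    ((outer_isHermitian_s17 ψ).sub (outer_isHermitian_s17 φ))
  -- each eigenvalue is at most s in absolute value
  have heig : ∀ i, |hΔ.eigenvalues i| ≤ s := by
    intro i
    set x : ι → ℂ := ⇑(hΔ.eigenvectorBasis i) with hxdef
    have hx : star x ⬝ᵥ x = 1 := unit_eigvec hΔ i
    have hTx1 : (outer x).PosSemidef := outer_posSemidef x
    have hTx2 : ((1 : Matrix ι ι ℂ) - outer x).PosSemidef := one_sub_outer_posSemidef x hx
    have hval : hΔ.eigenvalues i =
        (star x ⬝ᵥ ((outer ψ - outer φ) *ᵥ x)).re := hΔ.eigenvalues_eq i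
    have hsplit : (star x ⬝ᵥ ((outer ψ - outer φ) *ᵥ x)).re
        = (star ψ ⬝ᵥ (outer x *ᵥ ψ)).re - (star φ ⬝ᵥ (outer x *ᵥ φ)).re := by
      rw [Matrix.sub_mulVec, dotProduct_sub, Complex.sub_re,
        dot_outer_self ψ x, dot_outer_self φ x, dot_outer_self x ψ, dot_outer_self x φ,
        norm_dot_comm ψ x, norm_dot_comm φ x]
    have hub : hΔ.eigenvalues i ≤ s := by
      rw [hval, hsplit]
      exact key hTx1 hTx2 hψ hφ hk
    have hlb : -(hΔ.eigenvalues i) ≤ s := by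
      rw [hval, hsplit, neg_sub]
      have hk' : ‖star ψ ⬝ᵥ φ‖ < 1 := by rw [norm_dot_comm]; exact hk
      have := key hTx1 hTx2 hφ hψ hk'
      rw [norm_dot_comm ψ φ, ← hkdef] at this
      exact this
    rw [abs_le]
    exact ⟨by linarith, hub⟩
  -- sum of squared eigenvalues equals 2 s²
  have hsumsq : ∑ i, (hΔ.eigenvalues i) ^ 2 = 2 * s ^ 2 := by
    rw [← trace_sq_eq_sum_sq_s17 hΔ]
    have hexp : (outer ψ - outer φ) * (outer ψ - outer φ)
        = outer ψ * outer ψ - outer ψ * outer φ - outer φ * outer ψ + outer φ * outer φ := by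
      noncomm_ring
    rw [hexp, Matrix.trace_add, Matrix.trace_sub, Matrix.trace_sub,
      trace_outer_mul_outer_s17, trace_outer_mul_outer_s17, trace_outer_mul_outer_s17,
      trace_outer_mul_outer_s17, hψ, hφ]
    have hc1 : (star ψ ⬝ᵥ φ) * (star φ ⬝ᵥ ψ) = ((k ^ 2 : ℝ) : ℂ) := by
      rw [star_dot_comm ψ φ, ← Complex.normSq_eq_conj_mul_self]
      norm_cast
      rw [hkdef, Complex.normSq_eq_norm_sq]
    have hc2 : (star φ ⬝ᵥ ψ) * (star ψ ⬝ᵥ φ) = ((k ^ 2 : ℝ) : ℂ) := by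
      rw [mul_comm]; exact hc1
    rw [hc1, hc2, hs2]
    simp only [mul_one, Complex.add_re, Complex.sub_re, Complex.one_re, Complex.ofReal_re]
    ring
  -- conclude
  have hsum : 2 * s ≤ ∑ i, |hΔ.eigenvalues i| := by
    have h1 : ∑ i, (hΔ.eigenvalues i) ^ 2 ≤ ∑ i, s * |hΔ.eigenvalues i| := by
      apply Finset.sum_le_sum
      intro i _
      have : (hΔ.eigenvalues i) ^ 2 = |hΔ.eigenvalues i| * |hΔ.eigenvalues i| := by
        rw [← sq_abs]; ring
      rw [this]
      exact mul_le_mul_of_nonneg_right (heig i) (abs_nonneg _)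
    rw [hsumsq, ← Finset.mul_sum] at h1
    nlinarith
  rw [traceDist, dif_pos hΔ]
  linarith

lemma isUnitVec_iff (ψ : ι → ℂ) : IsUnitVec ψ ↔ star ψ ⬝ᵥ ψ = 1 := by
  rw [IsUnitVec, ← Complex.ofReal_eq_one, ← dot_self_real]

lemma tpow_outer (ψ : ι → ℂ) (N : ℕ) :
    tpow (outer ψ) N = outer (fun x : Fin N → ι => ∏ i, ψ (x i)) := by
  ext x y
  simp only [tpow, outer, Matrix.of_apply, map_prod]
  rw [← Finset.prod_mul_distrib]

lemma acc_outer {N : ℕ} (T : Matrix (Fin N → ι) (Fin N → ι) ℂ) (ψ : ι → ℂ) :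
    acc T (outer ψ) =
      (star (fun x : Fin N → ι => ∏ i, ψ (x i)) ⬝ᵥ (T *ᵥ fun x : Fin N → ι => ∏ i, ψ (x i))).re := by
  rw [acc, tpow_outer, trace_mul_outer]

lemma dot_pow (u v : ι → ℂ) (N : ℕ) :
    star (fun x : Fin N → ι => ∏ i, u (x i)) ⬝ᵥ (fun x : Fin N → ι => ∏ i, v (x i))
      = (star u ⬝ᵥ v) ^ N := by
  have h1 : star (fun x : Fin N → ι => ∏ i, u (x i)) ⬝ᵥ (fun x : Fin N → ι => ∏ i, v (x i))
      = ∑ x : Fin N → ι, ∏ i, (conj (u (x i)) * v (x i)) := by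
    simp only [dotProduct, Pi.star_apply, RCLike.star_def, map_prod]
    congr 1; ext x
    rw [← Finset.prod_mul_distrib]
  rw [h1]
  have h2 : (star u ⬝ᵥ v) ^ N = ∏ _i : Fin N, (star u ⬝ᵥ v) := by
    rw [Finset.prod_const, Finset.card_univ, Fintype.card_fin]
  rw [h2]
  have h3 : ∀ _i : Fin N, star u ⬝ᵥ v = ∑ j, conj (u j) * v j := by
    intro _; simp [dotProduct]
  rw [Finset.prod_congr rfl (fun i _ => h3 i), Finset.prod_univ_sum]
  rw [Fintype.piFinset_univ]

end Helpers

set_option maxHeartbeats 2000000 in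
/-- Theorem `thm:product`, explicit form: sample lower bound for
productness testing. -/
theorem stmt_17 (d : ℕ) (hd : 2 ≤ d) (ε : ℝ) (hε : ε ∈ Set.Ioo (0 : ℝ) 1)
    (N : ℕ) (hN : 1 ≤ N)
    (T : Matrix (Fin N → Fin d × Fin d) (Fin N → Fin d × Fin d) ℂ)
    (hT : IsTester T)
    (hcomp : ∀ ψ : Fin d × Fin d → ℂ, IsUnitVec ψ →
      (∃ a b : Fin d → ℂ, ∀ p : Fin d × Fin d, ψ p = a p.1 * b p.2) →
      2 / 3 ≤ acc T (outer ψ))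
    (hsound : ∀ ψ : Fin d × Fin d → ℂ, IsUnitVec ψ →
      (∀ φ : Fin d × Fin d → ℂ, IsUnitVec φ →
        (∃ a b : Fin d → ℂ, ∀ p : Fin d × Fin d, φ p = a p.1 * b p.2) →
        ε ≤ traceDist (outer ψ) (outer φ)) →
      acc T (outer ψ) ≤ 1 / 3) :
    1 / (9 * ε ^ 2) ≤ (N : ℝ) := by
  obtain ⟨hε0, hε1⟩ := hε
  rcases le_or_gt (1/3 : ℝ) ε with hbig | hsmall
  · -- trivial case: `1/(9ε²) ≤ 1 ≤ N`
    have h1 : (1:ℝ) ≤ 9 * ε ^ 2 := by nlinarith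
    have h2 : 1 / (9 * ε ^ 2) ≤ 1 := by
      rw [div_le_one (by positivity)]; exact h1
    have h3 : (1:ℝ) ≤ (N:ℝ) := by exact_mod_cast hN
    linarith
  -- main case : ε < 1/3
  set α : ℝ := Real.sqrt (1 - ε ^ 2) with hαdef
  have hα2 : α ^ 2 = 1 - ε ^ 2 := Real.sq_sqrt (by nlinarith)
  have hα0 : 0 < α := Real.sqrt_pos.mpr (by nlinarith)
  have hα1 : α < 1 := by nlinarith [hα2, hα0]
  have hεα : ε < α := by nlinarith [hα2, hα0]
  set i0 : Fin d := ⟨0, by omega⟩ with hi0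
  set i1 : Fin d := ⟨1, by omega⟩ with hi1
  have hne : ((i0, i0) : Fin d × Fin d) ≠ (i1, i1) := by
    simp [hi0, hi1, Prod.ext_iff, Fin.ext_iff]
  set ψ₀ : Fin d × Fin d → ℂ :=
    (α : ℂ) • (Pi.single ((i0, i0) : Fin d × Fin d) (1:ℂ) : Fin d × Fin d → ℂ)
      + (ε : ℂ) • (Pi.single ((i1, i1) : Fin d × Fin d) (1:ℂ) : Fin d × Fin d → ℂ) with hψ₀def
  set φ₀ : Fin d × Fin d → ℂ :=
    (Pi.single ((i0, i0) : Fin d × Fin d) (1:ℂ) : Fin d × Fin d → ℂ) with hφ₀def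
  have hdotψ₀ : ∀ w : Fin d × Fin d → ℂ,
      star w ⬝ᵥ ψ₀ = (α : ℂ) * conj (w (i0, i0)) + (ε : ℂ) * conj (w (i1, i1)) := by
    intro w
    rw [hψ₀def, dotProduct_add, dotProduct_smul, dotProduct_smul,
      dotProduct_single, dotProduct_single]
    simp [mul_comm]
  have hψ₀00 : ψ₀ (i0, i0) = (α : ℂ) := by
    rw [hψ₀def]
    simp [hφ₀def, Pi.single_eq_same, Pi.single_eq_of_ne hne]
  have hψ₀11 : ψ₀ (i1, i1) = (ε : ℂ) := by
    rw [hψ₀def]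
    simp [hφ₀def, Pi.single_eq_same, Pi.single_eq_of_ne (Ne.symm hne)]
  have hψ₀unit : star ψ₀ ⬝ᵥ ψ₀ = 1 := by
    rw [hdotψ₀ ψ₀, hψ₀00, hψ₀11, Complex.conj_ofReal, Complex.conj_ofReal]
    push_cast
    rw [show ((α:ℂ) * α + ε * ε) = ((α^2 + ε^2 : ℝ) : ℂ) by push_cast; ring, hα2]
    norm_num
  have hφ₀unit : star φ₀ ⬝ᵥ φ₀ = 1 := by
    rw [hφ₀def, dotProduct_single]
    simp [Pi.single_eq_same]
  have hφ₀prod : ∃ a b : Fin d → ℂ, ∀ p : Fin d × Fin d, φ₀ p = a p.1 * b p.2 := by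
    refine ⟨fun i => if i = i0 then 1 else 0, fun i => if i = i0 then 1 else 0, fun p => ?_⟩
    rw [hφ₀def, Pi.single_apply]
    by_cases h1 : p.1 = i0 <;> by_cases h2 : p.2 = i0 <;>
      simp [h1, h2, Prod.ext_iff]
  have hoverφ₀ : star φ₀ ⬝ᵥ ψ₀ = (α : ℂ) := by
    rw [hdotψ₀ φ₀, hφ₀def]
    simp [hφ₀def, Pi.single_eq_same, Pi.single_eq_of_ne (Ne.symm hne)]
  -- soundness premise: ψ₀ is ε-far from every product unit vector
  have hfar : ∀ φ : Fin d × Fin d → ℂ, IsUnitVec φ →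
      (∃ a b : Fin d → ℂ, ∀ p : Fin d × Fin d, φ p = a p.1 * b p.2) →
      ε ≤ traceDist (outer ψ₀) (outer φ) := by
    intro φ hφu ⟨a, b, hab⟩
    have hφdot : star φ ⬝ᵥ φ = 1 := (isUnitVec_iff φ).mp hφu
    -- the overlap is at most α
    have hover : ‖star φ ⬝ᵥ ψ₀‖ ≤ α := by
      rw [hdotψ₀ φ, hab, hab]
      have hxy : ∀ z w : ℂ, ‖conj (z * w)‖ = ‖z‖ * ‖w‖ := by
        intro z w; rw [RCLike.norm_conj, norm_mul]
      calc ‖(α : ℂ) * conj (a i0 * b i0) + (ε : ℂ) * conj (a i1 * b i1)‖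
          ≤ ‖(α : ℂ) * conj (a i0 * b i0)‖ + ‖(ε : ℂ) * conj (a i1 * b i1)‖ := norm_add_le _ _
        _ = α * (‖a i0‖ * ‖b i0‖) + ε * (‖a i1‖ * ‖b i1‖) := by
            rw [norm_mul, norm_mul, hxy, hxy, Complex.norm_real, Complex.norm_real,
              Real.norm_eq_abs, Real.norm_eq_abs, abs_of_pos hα0, abs_of_pos hε0]
        _ ≤ α := by
            set x := ‖a i0‖; set y := ‖b i0‖; set z := ‖a i1‖; set w := ‖b i1‖
            have hx0 : 0 ≤ x := norm_nonneg _
            have hy0 : 0 ≤ y := norm_nonneg _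
            have hz0 : 0 ≤ z := norm_nonneg _
            have hw0 : 0 ≤ w := norm_nonneg _
            have hSab : (∑ i, ‖a i‖ ^ 2) * (∑ i, ‖b i‖ ^ 2) = 1 := by
              have h1 : ∑ p : Fin d × Fin d, Complex.normSq (φ p)
                  = (∑ i, ‖a i‖ ^ 2) * (∑ i, ‖b i‖ ^ 2) := by
                rw [Fintype.sum_prod_type, Finset.sum_mul_sum]
                congr 1; ext i; congr 1; ext j
                rw [hab (i, j)]
                simp only [Complex.normSq_mul]
                rw [Complex.normSq_eq_norm_sq, Complex.normSq_eq_norm_sq]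
              rw [← h1]
              exact hφu
            have hSa : x ^ 2 + z ^ 2 ≤ ∑ i, ‖a i‖ ^ 2 := by
              have hsub : ({i0, i1} : Finset (Fin d)) ⊆ Finset.univ := Finset.subset_univ _
              have hne01 : i0 ≠ i1 := by simp [hi0, hi1, Fin.ext_iff]
              have := Finset.sum_le_sum_of_subset_of_nonneg hsub
                (fun i _ _ => by positivity : ∀ i ∈ Finset.univ, i ∉ ({i0, i1} : Finset (Fin d))
                  → 0 ≤ ‖a i‖ ^ 2)
              rwa [Finset.sum_pair hne01] at this
            have hSb : y ^ 2 + w ^ 2 ≤ ∑ i, ‖b i‖ ^ 2 := by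
              have hsub : ({i0, i1} : Finset (Fin d)) ⊆ Finset.univ := Finset.subset_univ _
              have hne01 : i0 ≠ i1 := by simp [hi0, hi1, Fin.ext_iff]
              have := Finset.sum_le_sum_of_subset_of_nonneg hsub
                (fun i _ _ => by positivity : ∀ i ∈ Finset.univ, i ∉ ({i0, i1} : Finset (Fin d))
                  → 0 ≤ ‖b i‖ ^ 2)
              rwa [Finset.sum_pair hne01] at this
            have hSa0 : 0 ≤ ∑ i, ‖a i‖ ^ 2 := Finset.sum_nonneg fun i _ => by positivity
            have hSb0 : 0 ≤ ∑ i, ‖b i‖ ^ 2 := Finset.sum_nonneg fun i _ => by positivity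
            have hprod1 : (x ^ 2 + z ^ 2) * (y ^ 2 + w ^ 2) ≤ 1 := by
              calc (x ^ 2 + z ^ 2) * (y ^ 2 + w ^ 2)
                  ≤ (∑ i, ‖a i‖ ^ 2) * (∑ i, ‖b i‖ ^ 2) := by
                    apply mul_le_mul hSa hSb (by positivity) hSa0
                _ = 1 := hSab
            have hcs : (x * y + z * w) ^ 2 ≤ (x ^ 2 + z ^ 2) * (y ^ 2 + w ^ 2) := by
              nlinarith [sq_nonneg (x * w - z * y)]
            have hxyzw : x * y + z * w ≤ 1 := by nlinarith [sq_nonneg (x*y + z*w - 1)]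
            nlinarith [mul_nonneg hz0 hw0, mul_nonneg hx0 hy0]
    have hk1 : ‖star φ ⬝ᵥ ψ₀‖ < 1 := lt_of_le_of_lt hover hα1
    have hd := traceDist_outer_ge hψ₀unit hφdot hk1
    calc ε ≤ Real.sqrt (1 - ‖star φ ⬝ᵥ ψ₀‖ ^ 2) := by
          rw [show ε = Real.sqrt (ε ^ 2) by rw [Real.sqrt_sq hε0.le]]
          apply Real.sqrt_le_sqrt
          nlinarith [norm_nonneg (star φ ⬝ᵥ ψ₀), hover]
      _ ≤ traceDist (outer ψ₀) (outer φ) := hd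
  -- apply completeness and soundness
  have hψ₀u : IsUnitVec ψ₀ := (isUnitVec_iff ψ₀).mpr hψ₀unit
  have hφ₀u : IsUnitVec φ₀ := (isUnitVec_iff φ₀).mpr hφ₀unit
  have hacc1 : 2/3 ≤ acc T (outer φ₀) := hcomp φ₀ hφ₀u hφ₀prod
  have hacc2 : acc T (outer ψ₀) ≤ 1/3 := hsound ψ₀ hψ₀u hfar
  -- the tensor-power vectors
  set Φ : (Fin N → Fin d × Fin d) → ℂ := fun x => ∏ i, φ₀ (x i) with hΦdef
  set Ψ : (Fin N → Fin d × Fin d) → ℂ := fun x => ∏ i, ψ₀ (x i) with hΨdef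
  have hΦunit : star Φ ⬝ᵥ Φ = 1 := by rw [hΦdef, dot_pow, hφ₀unit, one_pow]
  have hΨunit : star Ψ ⬝ᵥ Ψ = 1 := by rw [hΨdef, dot_pow, hψ₀unit, one_pow]
  have hoverΨΦ : star Ψ ⬝ᵥ Φ = ((α ^ N : ℝ) : ℂ) := by
    rw [hΨdef, hΦdef, dot_pow]
    have : star ψ₀ ⬝ᵥ φ₀ = (α : ℂ) := by
      rw [star_dot_comm, hoverφ₀, Complex.conj_ofReal]
    rw [this]
    push_cast
    ring
  have hnormΨΦ : ‖star Ψ ⬝ᵥ Φ‖ = α ^ N := by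
    rw [hoverΨΦ, Complex.norm_real, Real.norm_eq_abs, abs_of_pos (by positivity)]
  have hαN1 : α ^ N < 1 := pow_lt_one₀ hα0.le hα1 (by omega)
  -- the distinguishing advantage bound
  have hkey := key hT.1 hT.2 hΦunit hΨunit (by rw [hnormΨΦ]; exact hαN1)
  rw [← acc_outer, ← acc_outer, hnormΨΦ] at hkey
  have h13 : (1:ℝ)/3 ≤ Real.sqrt (1 - (α ^ N) ^ 2) := by linarith
  have hsq : (1:ℝ)/9 ≤ 1 - (α ^ N) ^ 2 := by
    have h0 : ((1:ℝ)/3) ^ 2 ≤ 1 - (α ^ N) ^ 2 := by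
      have := Real.sq_sqrt (show (0:ℝ) ≤ 1 - (α ^ N) ^ 2 by nlinarith [pow_pos hα0 N])
      nlinarith [Real.sqrt_nonneg (1 - (α ^ N) ^ 2)]
    nlinarith
  have hαN2 : (α ^ N) ^ 2 = (1 - ε ^ 2) ^ N := by
    rw [← pow_mul, mul_comm, pow_mul, hα2]
  rw [hαN2] at hsq
  -- Bernoulli
  have hbern : 1 - (N : ℝ) * ε ^ 2 ≤ (1 - ε ^ 2) ^ N := by
    have := one_add_mul_le_pow (show (-2:ℝ) ≤ -ε ^ 2 by nlinarith) N
    calc 1 - (N : ℝ) * ε ^ 2 = 1 + (N : ℝ) * (-ε ^ 2) := by ring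
      _ ≤ (1 + -ε ^ 2) ^ N := this
      _ = (1 - ε ^ 2) ^ N := by ring_nf
  have hNε : (1:ℝ)/9 ≤ (N : ℝ) * ε ^ 2 := by linarith
  rw [div_le_iff₀ (by positivity : (0:ℝ) < 9 * ε ^ 2)]
  nlinarith

end PaperStmt
end
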